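/- Let T > 0, let a, b, c : (0,T) × (0,1) → ℝ, and let u ∈ C⁰([0,T] × [0,1]) with u[t] ∈ C²((0,1)) for almost all t ∈ (0,T), ∂u/∂t existing and continuous on (0,T) × [0,1], the derivatives ∂u/∂x(t,0), ∂u/∂x(t,1) existing for all t ∈ (0,T], and ∂u/∂t = a·∂²u/∂x² + b·∂u/∂x + c·u for almost all t ∈ (0,T) and all x ∈ (0,1) (i.e., zero source term f ≡ 0). Let μ₀, μ₁ > 0 and λ₀, λ₁ ∈ ℝ be constants. Suppose a ≥ 0 on (0,T)×(0,1), there exist σ > 0 and η ∈ C²([0,1];(0,+∞)) with aη'' + bη' + (σ+c)η ≤ 0 on (0,T)×(0,1), μ₀η'(0) − λ₀η(0) < 0, μ₁η'(1) + λ₁η(1) > 0, and the nonlinear boundary conditions ( μ₀·∂u/∂x(t,0) − λ₀·u(t,0) )·u(t,0) = 0 and ( μ₁·∂u/∂x(t,1) + λ₁·u(t,1) )·u(t,1) = 0 hold for all t ∈ (0,T]. Then for all ζ ∈ [0,σ) and t ∈ (0,T]: ‖u[t]‖_{∞,η} ≤ exp(−ζt)·‖u[0]‖_{∞,η}. -/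

import Mathlib

/-!
Weighted maximum principle. Fix `M' > ‖u[0]‖_{∞,η}` and let `t₀` be the first time at which
`e^{ζt} u/η` reaches `M'`. At a positive maximum of `u[s]/η` at a time `s` where the equation holds,
`u ≤ kη` with equality there: the nonlinear boundary conditions are Robin conditions where
`u ≠ 0`, so the strict boundary inequalities for `η` rule out the endpoints, and in the interior the
second-derivative test and `aη'' + bη' + (σ + c)η ≤ 0` give `u_t ≤ -σu`. The equation holds only
for almost every time, so this is applied at good times `s → t₀` and passed to the limit by
continuity of `u` and `u_t`; at the touching point it contradicts `u_t ≥ -ζu`, as `ζ < σ`. The same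
argument for `-u` bounds `|u|`.
-/

open Set MeasureTheory Filter Topology Function Real

theorem IsLocalMaxOn.mul_nonpos_of_hasDerivWithinAt {f : ℝ → ℝ} {s : Set ℝ} {a d y : ℝ}
    (h : IsLocalMaxOn f s a) (hf : HasDerivWithinAt f d s a)
    (hy : y ∈ posTangentConeAt s a) : y * d ≤ 0 := by
  simpa [mul_comm] using h.hasFDerivWithinAt_nonpos hf.hasFDerivWithinAt hy

theorem IsMaxOn.hasDerivWithinAt_Icc_left_nonpos {f : ℝ → ℝ} {a b d : ℝ} (hab : a < b)
    (h : IsMaxOn f (Icc a b) a) (hf : HasDerivWithinAt f d (Icc a b) a) : d ≤ 0 := by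
  have hy : b - a ∈ posTangentConeAt (Icc a b) a :=
    sub_mem_posTangentConeAt_of_segment_subset (segment_eq_Icc hab.le).subset
  exact nonpos_of_mul_nonpos_right (h.localize.mul_nonpos_of_hasDerivWithinAt hf hy)
    (sub_pos.2 hab)

theorem IsMaxOn.hasDerivWithinAt_Icc_right_nonneg {f : ℝ → ℝ} {a b d : ℝ} (hab : a < b)
    (h : IsMaxOn f (Icc a b) b) (hf : HasDerivWithinAt f d (Icc a b) b) : 0 ≤ d := by
  have hy : a - b ∈ posTangentConeAt (Icc a b) b :=
    sub_mem_posTangentConeAt_of_segment_subset (by rw [segment_symm, segment_eq_Icc hab.le])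
  exact nonneg_of_mul_nonpos_right (h.localize.mul_nonpos_of_hasDerivWithinAt hf hy)
    (sub_neg.2 hab)

theorem IsLocalMax.secondDeriv_nonpos {f f' : ℝ → ℝ} {x f'' : ℝ} (h : IsLocalMax f x)
    (hf : ∀ᶠ y in 𝓝 x, HasDerivAt f (f' y) y) (hf' : HasDerivAt f' f'' x) : f'' ≤ 0 := by
  by_contra! hpos
  have hderiv : deriv f =ᶠ[𝓝 x] f' := hf.mono fun y hy => hy.deriv
  have hmin : IsLocalMin f x := by
    refine isLocalMin_of_deriv_deriv_pos ?_ h.deriv_eq_zero hf.self_of_nhds.continuousAt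
    rwa [(hf'.congr_of_eventuallyEq hderiv).deriv]
  have hconst : f =ᶠ[𝓝 x] fun _ => f x := (h.and hmin).mono fun y hy => le_antisymm hy.1 hy.2
  have hzero : f' =ᶠ[𝓝 x] fun _ => 0 := by
    filter_upwards [hderiv.symm, hconst.deriv] with y hy hy'
    rw [hy, hy', deriv_const]
  exact hpos.ne ((hf'.congr_of_eventuallyEq hzero.symm).unique (hasDerivAt_const x 0)).symm

theorem IsMaxOn.sub_div_mul {f η : ℝ → ℝ} {K : Set ℝ} {z : ℝ}
    (h : IsMaxOn (fun x => f x / η x) K z) (hη : ∀ x ∈ K, 0 < η x) (hz : z ∈ K) :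
    IsMaxOn (fun x => f x - f z / η z * η x) K z := by
  intro x hx
  have hle : f x ≤ f z / η z * η x := (div_le_iff₀ (hη x hx)).1 (h hx)
  simp only [mem_ofPred_eq, div_mul_cancel₀ _ (hη z hz).ne', sub_self]
  linarith

theorem MeasureTheory.Measure.frequently_nhds_of_ae_restrict {X : Type*} [TopologicalSpace X]
    [MeasurableSpace X] [OpensMeasurableSpace X] {μ : Measure X} [μ.IsOpenPosMeasure]
    {p : X → Prop} {S : Set X} (hS : IsOpen S) (h : ∀ᵐ t ∂μ.restrict S, p t) {t₀ : X}
    (ht₀ : t₀ ∈ S) : ∃ᶠ t in 𝓝 t₀, t ∈ S ∧ p t := by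
  have hdense : Dense {t | t ∈ S → p t} := dense_of_ae ((ae_restrict_iff' hS.measurableSet).1 h)
  exact ((mem_closure_iff_frequently.1 (hdense t₀)).and_eventually (hS.mem_nhds ht₀)).mono
    fun t ht => ⟨ht.2, ht.1 ht.2⟩

def DecaysAtPositiveMax (K : Set ℝ) (η : ℝ → ℝ) (σ : ℝ) (f ft : ℝ → ℝ) : Prop :=
  ∀ z ∈ K, IsMaxOn (fun x => f x / η x) K z → 0 < f z → ft z ≤ -σ * f z

theorem decaysAtPositiveMax_of_robin
    {A B C f ft fx fxx η η' η'' : ℝ → ℝ} {σ μ₀ μ₁ lam₀ lam₁ : ℝ} (hμ₀ : 0 < μ₀) (hμ₁ : 0 < μ₁)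
    (hη_pos : ∀ x ∈ Icc (0:ℝ) 1, 0 < η x)
    (hη1 : ∀ x ∈ Icc (0:ℝ) 1, HasDerivWithinAt η (η' x) (Icc 0 1) x)
    (hη2 : ∀ x ∈ Icc (0:ℝ) 1, HasDerivWithinAt η' (η'' x) (Icc 0 1) x)
    (hη_bc0 : μ₀ * η' 0 - lam₀ * η 0 < 0) (hη_bc1 : 0 < μ₁ * η' 1 + lam₁ * η 1)
    (hA : ∀ x ∈ Ioo (0:ℝ) 1, 0 ≤ A x)
    (hcond : ∀ x ∈ Ioo (0:ℝ) 1, A x * η'' x + B x * η' x + (σ + C x) * η x ≤ 0)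
    (hfx : ∀ x ∈ Ioo (0:ℝ) 1, HasDerivAt f (fx x) x)
    (hfxx : ∀ x ∈ Ioo (0:ℝ) 1, HasDerivAt fx (fxx x) x)
    (hpde : ∀ x ∈ Ioo (0:ℝ) 1, ft x = A x * fxx x + B x * fx x + C x * f x)
    (hfx0 : HasDerivWithinAt f (fx 0) (Icc 0 1) 0) (hfx1 : HasDerivWithinAt f (fx 1) (Icc 0 1) 1)
    (hbc0 : (μ₀ * fx 0 - lam₀ * f 0) * f 0 = 0) (hbc1 : (μ₁ * fx 1 + lam₁ * f 1) * f 1 = 0) :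
    DecaysAtPositiveMax (Icc 0 1) η σ f ft := by
  intro z hz hmax hfz
  set k := f z / η z
  have hk : 0 < k := div_pos hfz (hη_pos z hz)
  have hfk : f z = k * η z := (div_mul_cancel₀ _ (hη_pos z hz).ne').symm
  have hg : IsMaxOn (fun x => f x - k * η x) (Icc 0 1) z := hmax.sub_div_mul hη_pos hz
  rcases hz.1.eq_or_lt with rfl | hz0
  · have hslope := hg.hasDerivWithinAt_Icc_left_nonpos zero_lt_one
      (hfx0.sub ((hη1 0 (left_mem_Icc.2 zero_le_one)).const_mul k))
    have hrobin : μ₀ * fx 0 = lam₀ * f 0 := by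
      linarith [(mul_eq_zero.1 hbc0).resolve_right hfz.ne']
    rw [hfk] at hrobin
    nlinarith [mul_neg_of_pos_of_neg hk hη_bc0, mul_le_mul_of_nonneg_left hslope hμ₀.le]
  rcases hz.2.eq_or_lt with rfl | hz1
  · have hslope := hg.hasDerivWithinAt_Icc_right_nonneg zero_lt_one
      (hfx1.sub ((hη1 1 (right_mem_Icc.2 zero_le_one)).const_mul k))
    have hrobin : μ₁ * fx 1 = -(lam₁ * f 1) := by
      linarith [(mul_eq_zero.1 hbc1).resolve_right hfz.ne']
    rw [hfk] at hrobin
    nlinarith [mul_pos hk hη_bc1, mul_le_mul_of_nonneg_left hslope hμ₁.le]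
  have hzI : z ∈ Ioo (0:ℝ) 1 := ⟨hz0, hz1⟩
  have hnhds : Icc (0:ℝ) 1 ∈ 𝓝 z := Icc_mem_nhds hz0 hz1
  have hgx : ∀ᶠ y in 𝓝 z, HasDerivAt (fun x => f x - k * η x) (fx y - k * η' y) y := by
    filter_upwards [isOpen_Ioo.mem_nhds hzI] with y hy
    exact (hfx y hy).sub (((hη1 y (Ioo_subset_Icc_self hy)).hasDerivAt
      (Icc_mem_nhds hy.1 hy.2)).const_mul k)
  have hgxx := (hfxx z hzI).sub (((hη2 z hz).hasDerivAt hnhds).const_mul k)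
  have hgx0 : fx z - k * η' z = 0 := (hg.isLocalMax hnhds).hasDerivAt_eq_zero hgx.self_of_nhds
  have hconcave : fxx z - k * η'' z ≤ 0 := (hg.isLocalMax hnhds).secondDeriv_nonpos hgx hgxx
  have hsuper := mul_le_mul_of_nonneg_left (hcond z hzI) hk.le
  rw [hpde z hzI, hfk, show fx z = k * η' z by linarith]
  nlinarith [mul_le_mul_of_nonneg_left hconcave (hA z hzI)]

theorem exists_first_nonneg {F : ℝ → ℝ → ℝ} {K : Set ℝ} {t₁ x₁ : ℝ} (hK : IsCompact K)
    (hF : ContinuousOn (uncurry F) (Icc 0 t₁ ×ˢ K)) (h0 : ∀ x ∈ K, F 0 x < 0)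
    (ht₁ : 0 ≤ t₁) (hx₁ : x₁ ∈ K) (h₁ : 0 ≤ F t₁ x₁) :
    ∃ t₀ ∈ Ioc 0 t₁, ∃ x₀ ∈ K, F t₀ x₀ = 0 ∧ ∀ s ∈ Icc 0 t₀, ∀ x ∈ K, F s x ≤ 0 := by
  set P := Icc 0 t₁ ×ˢ K ∩ uncurry F ⁻¹' Ici 0
  have hP : IsCompact P := (isCompact_Icc.prod hK).of_isClosed_subset
    (hF.preimage_isClosed_of_isClosed (isClosed_Icc.prod hK.isClosed) isClosed_Ici)
    inter_subset_left
  obtain ⟨⟨t₀, x₀⟩, ⟨⟨ht₀, hx₀⟩, hFx₀⟩, hmin⟩ :=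
    hP.exists_isMinOn ⟨(t₁, x₁), ⟨⟨ht₁, le_rfl⟩, hx₁⟩, h₁⟩ continuous_fst.continuousOn
  have hbefore : ∀ s ∈ Ico 0 t₀, ∀ x ∈ K, F s x < 0 := fun s hs x hx => by
    by_contra! h
    exact hs.2.not_ge (hmin (show (s, x) ∈ P from ⟨⟨⟨hs.1, hs.2.le.trans ht₀.2⟩, hx⟩, h⟩))
  have ht₀pos : 0 < t₀ := ht₀.1.lt_of_ne fun h => (h0 x₀ hx₀).not_ge (h ▸ hFx₀)
  have hbelow : ∀ s ∈ Icc 0 t₀, ∀ x ∈ K, F s x ≤ 0 := by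
    intro s hs x hx
    have hcont : ContinuousOn (F · x) (Icc 0 t₀) := hF.comp
      (continuousOn_id.prodMk continuousOn_const) fun τ hτ => ⟨⟨hτ.1, hτ.2.trans ht₀.2⟩, hx⟩
    rw [← closure_Ico ht₀pos.ne] at hcont hs
    exact le_on_closure (fun s hs => (hbefore s hs x hx).le) hcont continuousOn_const hs
  exact ⟨t₀, ⟨ht₀pos, ht₀.2⟩, x₀, hx₀, le_antisymm (hbelow t₀ ⟨ht₀.1, le_rfl⟩ x₀ hx₀) hFx₀,
    hbelow⟩

theorem exists_isMaxOn_decaysAtPositiveMax_of_frequently {u ut : ℝ → ℝ → ℝ} {η : ℝ → ℝ}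
    {S K : Set ℝ} {σ t₀ x₀ : ℝ} (hK : IsCompact K) (hu : ContinuousOn (uncurry u) (S ×ˢ K))
    (hut : ContinuousOn (uncurry ut) (S ×ˢ K)) (hη : ContinuousOn η K)
    (hη_pos : ∀ x ∈ K, 0 < η x)
    (hdecay : ∃ᶠ s in 𝓝 t₀, s ∈ S ∧ DecaysAtPositiveMax K η σ (u s) (ut s))
    (ht₀ : t₀ ∈ S) (hx₀ : x₀ ∈ K) (hpos : 0 < u t₀ x₀) :
    ∃ xb ∈ K, IsMaxOn (fun x => u t₀ x / η x) K xb ∧ ut t₀ xb ≤ -σ * u t₀ xb := by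
  obtain ⟨s, hs, hsS⟩ := exists_seq_forall_of_frequently hdecay
  set R : ℝ × ℝ → ℝ := fun p => u p.1 p.2 / η p.2
  have hR : ContinuousOn R (S ×ˢ K) :=
    hu.div (hη.comp continuousOn_snd fun p hp => hp.2) fun p hp => (hη_pos _ hp.2).ne'
  have hmaxima : ∀ n, ∃ z ∈ K, IsMaxOn (fun x => u (s n) x / η x) K z := fun n =>
    hK.exists_isMaxOn ⟨x₀, hx₀⟩
      (hR.comp (continuousOn_const.prodMk continuousOn_id) fun x hx => ⟨(hsS n).1, hx⟩)
  choose z hzK hzmax using hmaxima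
  obtain ⟨xb, hxb, ψ, hψ, hzψ⟩ := hK.tendsto_subseq hzK
  have hlim : ∀ {y : ℕ → ℝ} {y₀ : ℝ}, Tendsto y atTop (𝓝 y₀) → (∀ n, y n ∈ K) →
      Tendsto (fun n => (s (ψ n), y n)) atTop (𝓝[S ×ˢ K] (t₀, y₀)) := fun hy hyK =>
    tendsto_nhdsWithin_iff.2 ⟨(hs.comp hψ.tendsto_atTop).prodMk_nhds hy,
      Eventually.of_forall fun n => ⟨(hsS _).1, hyK n⟩⟩
  have hRz : Tendsto (fun n => R (s (ψ n), z (ψ n))) atTop (𝓝 (R (t₀, xb))) :=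
    (hR _ ⟨ht₀, hxb⟩).tendsto.comp (hlim hzψ fun n => hzK _)
  have hRx : ∀ x ∈ K, Tendsto (fun n => R (s (ψ n), x)) atTop (𝓝 (R (t₀, x))) := fun x hx =>
    (hR _ ⟨ht₀, hx⟩).tendsto.comp (hlim tendsto_const_nhds fun _ => hx)
  refine ⟨xb, hxb, fun x hx => le_of_tendsto_of_tendsto' (hRx x hx) hRz fun n => hzmax _ hx, ?_⟩
  have hupos : ∀ᶠ n in atTop, 0 < u (s (ψ n)) (z (ψ n)) := by
    filter_upwards [(hRx x₀ hx₀).eventually (eventually_gt_nhds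
      (div_pos hpos (hη_pos x₀ hx₀)))] with n hn
    exact (div_pos_iff_of_pos_right (hη_pos _ (hzK _))).1 (hn.trans_le (hzmax _ hx₀))
  exact le_of_tendsto_of_tendsto ((hut _ ⟨ht₀, hxb⟩).tendsto.comp (hlim hzψ fun n => hzK _))
    (((hu _ ⟨ht₀, hxb⟩).tendsto.comp (hlim hzψ fun n => hzK _)).const_mul (-σ))
    (hupos.mono fun n hn => (hsS (ψ n)).2 _ (hzK _) (hzmax _) hn)

theorem div_lt_exp_mul_of_decaysAtPositiveMax {u ut : ℝ → ℝ → ℝ} {η : ℝ → ℝ} {K : Set ℝ}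
    {T σ ζ M : ℝ} (hK : IsCompact K) (hu : ContinuousOn (uncurry u) (Icc 0 T ×ˢ K))
    (hut : ∀ t ∈ Ioo 0 T, ∀ x ∈ K, HasDerivAt (u · x) (ut t x) t)
    (hut_cont : ContinuousOn (uncurry ut) (Ioo 0 T ×ˢ K))
    (hη : ContinuousOn η K) (hη_pos : ∀ x ∈ K, 0 < η x)
    (hdecay : ∀ᵐ s ∂volume.restrict (Ioo 0 T), DecaysAtPositiveMax K η σ (u s) (ut s))
    (hζ : ζ < σ) (hM : 0 < M) (h0 : ∀ x ∈ K, u 0 x / η x < M) :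
    ∀ t ∈ Ico 0 T, ∀ x ∈ K, u t x / η x < exp (-ζ * t) * M := by
  intro t₁ ht₁ x₁ hx₁
  by_contra! h₁
  set F : ℝ → ℝ → ℝ := fun t x => u t x / η x - exp (-ζ * t) * M
  have hF : ContinuousOn (uncurry F) (Icc 0 t₁ ×ˢ K) :=
    ((hu.mono (prod_mono (Icc_subset_Icc_right ht₁.2.le) subset_rfl)).div
      (hη.comp continuousOn_snd fun p hp => hp.2) fun p hp => (hη_pos _ hp.2).ne').sub
      (by fun_prop)
  obtain ⟨t₀, ht₀, x₀, hx₀, htouch, hbelow⟩ := exists_first_nonneg hK hF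
    (fun x hx => by simpa [F] using h0 x hx) ht₁.1 hx₁ (sub_nonneg.2 h₁)
  have ht₀T : t₀ ∈ Ioo 0 T := ⟨ht₀.1, ht₀.2.trans_lt ht₁.2⟩
  have hratio : ∀ x ∈ K, u t₀ x / η x ≤ exp (-ζ * t₀) * M := fun x hx =>
    sub_nonpos.1 (hbelow t₀ ⟨ht₀.1.le, le_rfl⟩ x hx)
  have hratio₀ : u t₀ x₀ / η x₀ = exp (-ζ * t₀) * M := sub_eq_zero.1 htouch
  have hpos : 0 < u t₀ x₀ := (div_pos_iff_of_pos_right (hη_pos x₀ hx₀)).1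
    (hratio₀ ▸ mul_pos (exp_pos _) hM)
  obtain ⟨xb, hxb, hmax, hrate⟩ := exists_isMaxOn_decaysAtPositiveMax_of_frequently hK
    (hu.mono (prod_mono Ioo_subset_Icc_self subset_rfl)) hut_cont hη hη_pos
    (Measure.frequently_nhds_of_ae_restrict isOpen_Ioo hdecay ht₀T) ht₀T hx₀ hpos
  have hratiob : u t₀ xb / η xb = exp (-ζ * t₀) * M :=
    le_antisymm (hratio xb hxb) (hratio₀ ▸ hmax hx₀)
  have hderiv : HasDerivAt (F · xb) (ut t₀ xb / η xb - exp (-ζ * t₀) * (-ζ) * M) t₀ := by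
    have := ((hasDerivAt_id t₀).const_mul (-ζ)).exp.mul_const M
    simp only [id, mul_one] at this
    exact ((hut t₀ ht₀T xb hxb).div_const _).sub this
  have hslope := IsMaxOn.hasDerivWithinAt_Icc_right_nonneg ht₀.1
    (fun s hs => by simpa [F, hratiob] using hbelow s hs xb hxb) hderiv.hasDerivWithinAt
  have hrate' : ut t₀ xb / η xb ≤ -σ * (u t₀ xb / η xb) := by
    rw [mul_div_assoc']
    exact div_le_div_of_nonneg_right hrate (hη_pos xb hxb).le
  rw [hratiob] at hrate'
  nlinarith [mul_pos (sub_pos.2 hζ) (mul_pos (exp_pos (-ζ * t₀)) hM)]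

theorem abs_div_le_exp_mul_of_decaysAtPositiveMax {u ut : ℝ → ℝ → ℝ} {η : ℝ → ℝ} {K : Set ℝ}
    {T σ ζ M : ℝ} (hK : IsCompact K) (hT : 0 < T) (hu : ContinuousOn (uncurry u) (Icc 0 T ×ˢ K))
    (hut : ∀ t ∈ Ioo 0 T, ∀ x ∈ K, HasDerivAt (u · x) (ut t x) t)
    (hut_cont : ContinuousOn (uncurry ut) (Ioo 0 T ×ˢ K))
    (hη : ContinuousOn η K) (hη_pos : ∀ x ∈ K, 0 < η x)
    (hdecay : ∀ᵐ s ∂volume.restrict (Ioo 0 T),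
      DecaysAtPositiveMax K η σ (u s) (ut s) ∧ DecaysAtPositiveMax K η σ (-u s) (-ut s))
    (hζ : ζ < σ) (h0 : ∀ x ∈ K, |u 0 x| / η x ≤ M) :
    ∀ t ∈ Icc 0 T, ∀ x ∈ K, |u t x| / η x ≤ exp (-ζ * t) * M := by
  intro t ht x hx
  have hM : 0 ≤ M := (div_nonneg (abs_nonneg _) (hη_pos x hx).le).trans (h0 x hx)
  have hstrict : ∀ M' > M, ∀ s ∈ Ico 0 T, |u s x| / η x < exp (-ζ * s) * M' := by
    intro M' hM' s hs
    have h0' : ∀ y ∈ K, |u 0 y| / η y < M' := fun y hy => (h0 y hy).trans_lt hM'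
    have hup := div_lt_exp_mul_of_decaysAtPositiveMax hK hu hut hut_cont hη hη_pos
      (hdecay.mono fun _ h => h.1) hζ (hM.trans_lt hM') (fun y hy =>
        (div_le_div_of_nonneg_right (le_abs_self _) (hη_pos y hy).le).trans_lt (h0' y hy)) s hs x hx
    have hdown := div_lt_exp_mul_of_decaysAtPositiveMax (u := -u) (ut := -ut) hK hu.neg
      (fun t ht x hx => (hut t ht x hx).neg) hut_cont.neg hη hη_pos
      (hdecay.mono fun _ h => h.2) hζ (hM.trans_lt hM') (fun y hy =>
        (div_le_div_of_nonneg_right (neg_le_abs _) (hη_pos y hy).le).trans_lt (h0' y hy)) s hs x hx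
    rcases abs_cases (u s x) with ⟨h, -⟩ | ⟨h, -⟩ <;> rw [h] <;> assumption
  have hcont : ContinuousOn (fun s => |u s x| / η x) (Icc 0 T) :=
    ((hu.comp (continuousOn_id.prodMk continuousOn_const) fun s hs => ⟨hs, hx⟩).abs).div_const _
  rw [← closure_Ico hT.ne] at hcont ht
  refine le_on_closure (fun s hs => ?_) hcont
    (by fun_prop : Continuous fun s => exp (-ζ * s) * M).continuousOn ht
  rw [← div_le_iff₀' (exp_pos _)]
  exact le_of_forall_gt_imp_ge_of_dense fun M' hM' =>
    ((div_lt_iff₀' (exp_pos _)).2 (hstrict M' hM' s hs)).le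

theorem nonlinear_bc_decay_general
    (T : ℝ)
    (a b c : ℝ → ℝ → ℝ)
    (u ut ux uxx : ℝ → ℝ → ℝ)
    (hu_cont : ContinuousOn (fun p : ℝ × ℝ => u p.1 p.2) (Set.Icc 0 T ×ˢ Set.Icc 0 1))
    (hut : ∀ t ∈ Set.Ioo (0:ℝ) T, ∀ x ∈ Set.Icc (0:ℝ) 1,
      HasDerivAt (fun τ => u τ x) (ut t x) t)
    (hut_cont : ContinuousOn (fun p : ℝ × ℝ => ut p.1 p.2) (Set.Ioo 0 T ×ˢ Set.Icc 0 1))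
    (hux_bd : ∀ t ∈ Set.Ioc (0:ℝ) T,
      HasDerivWithinAt (u t) (ux t 0) (Set.Icc 0 1) 0 ∧
      HasDerivWithinAt (u t) (ux t 1) (Set.Icc 0 1) 1)
    (hC2_pde : ∀ᵐ t ∂(volume.restrict (Set.Ioo 0 T)),
      (∀ x ∈ Set.Ioo (0:ℝ) 1, HasDerivAt (u t) (ux t x) x) ∧
      (∀ x ∈ Set.Ioo (0:ℝ) 1, HasDerivAt (ux t) (uxx t x) x) ∧
      ContinuousOn (uxx t) (Set.Ioo 0 1) ∧
      (∀ x ∈ Set.Ioo (0:ℝ) 1,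
        ut t x = a t x * uxx t x + b t x * ux t x + c t x * u t x))
    (ha : ∀ t ∈ Set.Ioo (0:ℝ) T, ∀ x ∈ Set.Ioo (0:ℝ) 1, 0 ≤ a t x)
    (μ₀ μ₁ lam₀ lam₁ : ℝ) (hμ₀ : 0 < μ₀) (hμ₁ : 0 < μ₁)
    (σ : ℝ)
    (η η' η'' : ℝ → ℝ)
    (hη_pos : ∀ x ∈ Set.Icc (0:ℝ) 1, 0 < η x)
    (hη1 : ∀ x ∈ Set.Icc (0:ℝ) 1, HasDerivWithinAt η (η' x) (Set.Icc 0 1) x)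
    (hη2 : ∀ x ∈ Set.Icc (0:ℝ) 1, HasDerivWithinAt η' (η'' x) (Set.Icc 0 1) x)
    (hcond : ∀ t ∈ Set.Ioo (0:ℝ) T, ∀ x ∈ Set.Ioo (0:ℝ) 1,
      a t x * η'' x + b t x * η' x + (σ + c t x) * η x ≤ 0)
    (hbc0 : μ₀ * η' 0 - lam₀ * η 0 < 0)
    (hbc1 : μ₁ * η' 1 + lam₁ * η 1 > 0)
    (hnlbc : ∀ t ∈ Set.Ioc (0:ℝ) T,
      (μ₀ * ux t 0 - lam₀ * u t 0) * u t 0 = 0 ∧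
      (μ₁ * ux t 1 + lam₁ * u t 1) * u t 1 = 0) :
    ∀ ζ ∈ Set.Ico (0:ℝ) σ, ∀ t ∈ Set.Ioc (0:ℝ) T,
      sSup ((fun x => |u t x| / η x) '' Set.Icc 0 1) ≤
        Real.exp (-ζ * t) * sSup ((fun x => |u 0 x| / η x) '' Set.Icc 0 1) := by
  intro ζ hζ t ht
  have hη : ContinuousOn η (Icc 0 1) := fun x hx => (hη1 x hx).continuousWithinAt
  have hbdd : BddAbove ((fun x => |u 0 x| / η x) '' Icc 0 1) :=
    (isCompact_Icc.image_of_continuousOn (((hu_cont.comp (continuousOn_const.prodMk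
      continuousOn_id) fun x hx => ⟨⟨le_rfl, ht.1.le.trans ht.2⟩, hx⟩).abs).div hη
        fun x hx => (hη_pos x hx).ne')).bddAbove
  have hgood : ∀ᵐ s ∂volume.restrict (Ioo 0 T),
      DecaysAtPositiveMax (Icc 0 1) η σ (u s) (ut s) ∧
        DecaysAtPositiveMax (Icc 0 1) η σ (-u s) (-ut s) := by
    filter_upwards [hC2_pde, ae_restrict_mem measurableSet_Ioo] with s hsmooth hs
    obtain ⟨hux, huxx, -, hpde⟩ := hsmooth
    obtain ⟨hux0, hux1⟩ := hux_bd s (Ioo_subset_Ioc_self hs)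
    obtain ⟨hbc0_u, hbc1_u⟩ := hnlbc s (Ioo_subset_Ioc_self hs)
    refine ⟨decaysAtPositiveMax_of_robin hμ₀ hμ₁ hη_pos hη1 hη2 hbc0 hbc1 (ha s hs) (hcond s hs)
      hux huxx hpde hux0 hux1 hbc0_u hbc1_u, decaysAtPositiveMax_of_robin (fx := -ux s)
      (fxx := -uxx s) hμ₀ hμ₁ hη_pos hη1 hη2 hbc0 hbc1 (ha s hs) (hcond s hs)
      (fun x hx => (hux x hx).neg) (fun x hx => (huxx x hx).neg)
      (fun x hx => by simp only [Pi.neg_apply, hpde x hx]; ring) hux0.neg hux1.neg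
      (by simp only [Pi.neg_apply]; linear_combination hbc0_u)
      (by simp only [Pi.neg_apply]; linear_combination hbc1_u)⟩
  refine csSup_le ((nonempty_Icc.2 zero_le_one).image _) ?_
  rintro _ ⟨x, hx, rfl⟩
  exact abs_div_le_exp_mul_of_decaysAtPositiveMax isCompact_Icc (ht.1.trans_le ht.2) hu_cont hut
    hut_cont hη hη_pos hgood hζ.2
    (fun y hy => le_csSup hbdd (mem_image_of_mem _ hy))
    t ⟨ht.1.le, ht.2⟩ x hx

/-- **Remark after Corollary 2.3** (Karafyllis–Krstic): under conditions (2.11) and the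
highly nonlinear boundary conditions
`(μ₀ u_x(t,0) - λ₀ u(t,0))·u(t,0) = 0`, `(μ₁ u_x(t,1) + λ₁ u(t,1))·u(t,1) = 0`,
and with zero source term, the solution decays exponentially in the weighted sup norm:
`‖u[t]‖_{∞,η} ≤ exp(-ζt)·‖u[0]‖_{∞,η}`. -/
theorem nonlinear_bc_decay
    (T : ℝ) (hT : 0 < T)
    (a b c : ℝ → ℝ → ℝ)
    (u ut ux uxx : ℝ → ℝ → ℝ)
    (hu_cont : ContinuousOn (fun p : ℝ × ℝ => u p.1 p.2) (Set.Icc 0 T ×ˢ Set.Icc 0 1))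
    (hut : ∀ t ∈ Set.Ioo (0:ℝ) T, ∀ x ∈ Set.Icc (0:ℝ) 1,
      HasDerivAt (fun τ => u τ x) (ut t x) t)
    (hut_cont : ContinuousOn (fun p : ℝ × ℝ => ut p.1 p.2) (Set.Ioo 0 T ×ˢ Set.Icc 0 1))
    (hux_bd : ∀ t ∈ Set.Ioc (0:ℝ) T,
      HasDerivWithinAt (u t) (ux t 0) (Set.Icc 0 1) 0 ∧
      HasDerivWithinAt (u t) (ux t 1) (Set.Icc 0 1) 1)
    (hC2_pde : ∀ᵐ t ∂(volume.restrict (Set.Ioo 0 T)),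
      (∀ x ∈ Set.Ioo (0:ℝ) 1, HasDerivAt (u t) (ux t x) x) ∧
      (∀ x ∈ Set.Ioo (0:ℝ) 1, HasDerivAt (ux t) (uxx t x) x) ∧
      ContinuousOn (uxx t) (Set.Ioo 0 1) ∧
      (∀ x ∈ Set.Ioo (0:ℝ) 1,
        ut t x = a t x * uxx t x + b t x * ux t x + c t x * u t x))
    (ha : ∀ t ∈ Set.Ioo (0:ℝ) T, ∀ x ∈ Set.Ioo (0:ℝ) 1, 0 ≤ a t x)
    (μ₀ μ₁ lam₀ lam₁ : ℝ) (hμ₀ : 0 < μ₀) (hμ₁ : 0 < μ₁)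
    (σ : ℝ) (hσ : 0 < σ)
    (η η' η'' : ℝ → ℝ)
    (hη_pos : ∀ x ∈ Set.Icc (0:ℝ) 1, 0 < η x)
    (hη1 : ∀ x ∈ Set.Icc (0:ℝ) 1, HasDerivWithinAt η (η' x) (Set.Icc 0 1) x)
    (hη2 : ∀ x ∈ Set.Icc (0:ℝ) 1, HasDerivWithinAt η' (η'' x) (Set.Icc 0 1) x)
    (hη''_cont : ContinuousOn η'' (Set.Icc 0 1))
    (hcond : ∀ t ∈ Set.Ioo (0:ℝ) T, ∀ x ∈ Set.Ioo (0:ℝ) 1,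
      a t x * η'' x + b t x * η' x + (σ + c t x) * η x ≤ 0)
    (hbc0 : μ₀ * η' 0 - lam₀ * η 0 < 0)
    (hbc1 : μ₁ * η' 1 + lam₁ * η 1 > 0)
    (hnlbc : ∀ t ∈ Set.Ioc (0:ℝ) T,
      (μ₀ * ux t 0 - lam₀ * u t 0) * u t 0 = 0 ∧
      (μ₁ * ux t 1 + lam₁ * u t 1) * u t 1 = 0) :
    ∀ ζ ∈ Set.Ico (0:ℝ) σ, ∀ t ∈ Set.Ioc (0:ℝ) T,
      sSup ((fun x => |u t x| / η x) '' Set.Icc 0 1) ≤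
        Real.exp (-ζ * t) * sSup ((fun x => |u 0 x| / η x) '' Set.Icc 0 1) :=
  nonlinear_bc_decay_general T a b c u ut ux uxx hu_cont hut hut_cont hux_bd hC2_pde ha μ₀ μ₁ lam₀
    lam₁ hμ₀ hμ₁ σ η η' η'' hη_pos hη1 hη2 hcond hbc0 hbc1 hnlbc
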